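/- Let P be a finite probability space on an alphabet Ω and let A ⊆ Ω. If α is a Martin-Löf P-random infinite sequence over Ω, then the infinite binary sequence χ_A(α) is Martin-Löf P_A-random, where χ_A(α) is defined by (χ_A(α))(n) = 1 if α(n) ∈ A and 0 otherwise, and P_A is the finite probability space on {0,1} with P_A(1) = P(A) and P_A(0) = 1 − P(A), where P(A) = ∑_{a∈A} P(a). -/

import Mathlib

/-!
`χ_A(α)` is the image of `α` under the letter map `a ↦ decide (a ∈ A)`, and `P_A` is the image of
`P` under the same map. Pulling a `P_A`-test back along the letter map gives a `P`-test: it is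
still r.e., and it has the same measure, because the product of image weights over a string is the
sum of the `P`-weights of its preimage strings. The pulled-back test covers `α` exactly when the
original covers `χ_A(α)`, so randomness of `α` transfers.
-/

open scoped BigOperators

namespace Paper

/-- The measure `λ_P([S])` of the open set generated by a set `S` of strings over `Ω`:
the supremum over `n` of the `P`-weight of all length-`n` strings extending some string in `S`. -/
noncomputable def cylMeasure {Ω : Type*} [Fintype Ω] (P : Ω → ℝ) (S : Set (List Ω)) : ℝ :=
  ⨆ n : ℕ, ∑ τ : Fin n → Ω,
    Set.indicator {τ : Fin n → Ω | ∃ σ ∈ S, σ <+: List.ofFn τ} (fun τ => ∏ i, P (τ i)) τ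

/-- The prefix of length `n` of the infinite sequence `α`. -/
def seqPrefix {Ω : Type*} (α : ℕ → Ω) (n : ℕ) : List Ω := List.ofFn fun i : Fin n => α i

/-- `α` belongs to the open set `[S]` generated by the set of strings `S`. -/
def inOpen {Ω : Type*} (S : Set (List Ω)) (α : ℕ → Ω) : Prop :=
  ∃ σ ∈ S, seqPrefix α σ.length = σ

/-- `P` is a finite probability space on the alphabet `Ω`. -/
def IsFPS {Ω : Type*} [Fintype Ω] (P : Ω → ℝ) : Prop :=
  (∀ a, 0 ≤ P a) ∧ ∑ a, P a = 1

/-- `C ⊆ ℕ × Ω*` is recursively enumerable (under a canonical encoding of the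
finite alphabet `Ω` by an initial segment of `ℕ`). -/
def REset {Ω : Type*} [Fintype Ω] (C : Set (ℕ × List Ω)) : Prop :=
  ∃ e : Ω ≃ Fin (Fintype.card Ω),
    REPred fun p : ℕ × List (Fin (Fintype.card Ω)) => (p.1, p.2.map e.symm) ∈ C

/-- A Martin-Löf `P`-test. -/
def MLTest {Ω : Type*} [Fintype Ω] (P : Ω → ℝ) (C : Set (ℕ × List Ω)) : Prop :=
  REset C ∧ ∀ n : ℕ, 0 < n → cylMeasure P {σ | (n, σ) ∈ C} < (2 : ℝ)⁻¹ ^ n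

/-- `α` is Martin-Löf `P`-random. -/
def MLRandom {Ω : Type*} [Fintype Ω] (P : Ω → ℝ) (α : ℕ → Ω) : Prop :=
  ∀ C : Set (ℕ × List Ω), MLTest P C → ∃ n : ℕ, 0 < n ∧ ¬ inOpen {σ | (n, σ) ∈ C} α
/-- The probability `P(A)` of an event `A ⊆ Ω`. -/
noncomputable def evP {Ω : Type*} [Fintype Ω] (P : Ω → ℝ) (A : Set Ω) : ℝ :=
  ∑ x, A.indicator P x

theorem REPred.comp {α β : Type*} [Primcodable α] [Primcodable β] {p : β → Prop}
    (hp : REPred p) {f : α → β} (hf : Computable f) : REPred fun a => p (f a) :=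
  Partrec.comp hp hf

theorem seqPrefix_comp {Ω Γ : Type*} (f : Ω → Γ) (α : ℕ → Ω) (n : ℕ) :
    seqPrefix (f ∘ α) n = (seqPrefix α n).map f := by
  rw [seqPrefix, seqPrefix, List.map_ofFn]
  rfl

theorem exists_prefix_map_iff {Ω Γ : Type*} (f : Ω → Γ) (S : Set (List Γ)) (τ : List Ω) :
    (∃ σ, σ.map f ∈ S ∧ σ <+: τ) ↔ ∃ ρ ∈ S, ρ <+: τ.map f := by
  constructor
  · rintro ⟨σ, hσ, hpre⟩
    exact ⟨σ.map f, hσ, hpre.map f⟩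
  · rintro ⟨ρ, hρ, hpre⟩
    refine ⟨τ.take ρ.length, ?_, List.take_prefix _ _⟩
    rwa [List.map_take, ← List.prefix_iff_eq_take.mp hpre]

theorem inOpen_preimage_map {Ω Γ : Type*} (f : Ω → Γ) (S : Set (List Γ)) (α : ℕ → Ω) :
    inOpen {σ | σ.map f ∈ S} α ↔ inOpen S (f ∘ α) := by
  constructor
  · rintro ⟨σ, hσ, hα⟩
    exact ⟨σ.map f, hσ, by rw [List.length_map, seqPrefix_comp, hα]⟩
  · rintro ⟨ρ, hρ, hα⟩
    refine ⟨seqPrefix α ρ.length, ?_, by simp [seqPrefix]⟩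
    rwa [Set.mem_ofPred_eq, ← seqPrefix_comp, hα]

theorem REset.preimage_map {Ω Γ : Type*} [Fintype Ω] [Fintype Γ] (f : Ω → Γ)
    {C : Set (ℕ × List Γ)} (hC : REset C) :
    REset {p : ℕ × List Ω | (p.1, p.2.map f) ∈ C} := by
  obtain ⟨eΓ, hre⟩ := hC
  let eΩ := Fintype.equivFin Ω
  let g : Fin (Fintype.card Ω) → Fin (Fintype.card Γ) := fun i => eΓ (f (eΩ.symm i))
  have hg : Computable fun p : ℕ × List (Fin (Fintype.card Ω)) => (p.1, p.2.map g) :=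
    Computable.fst.pair
      (Primrec.list_map Primrec.snd ((Primrec.dom_finite g).comp Primrec.snd).to₂).to_comp
  refine ⟨eΩ, (REPred.comp hre hg).of_eq fun p => ?_⟩
  simp [g, Function.comp_def]

section LetterMap

variable {Ω Γ : Type*} [Fintype Ω] [DecidableEq Γ]

def mapWeight (f : Ω → Γ) (P : Ω → ℝ) (c : Γ) : ℝ :=
  ∑ a ∈ Finset.univ.filter (fun a => f a = c), P a

theorem prod_mapWeight (f : Ω → Γ) (P : Ω → ℝ) {n : ℕ} (b : Fin n → Γ) :
    ∏ i, mapWeight f P (b i) =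
      ∑ τ ∈ Finset.univ.filter (fun τ : Fin n → Ω => f ∘ τ = b), ∏ i, P (τ i) := by
  have hfiber : Finset.univ.filter (fun τ : Fin n → Ω => f ∘ τ = b) =
      Fintype.piFinset fun i => Finset.univ.filter (fun a => f a = b i) := by
    ext τ
    simp [Fintype.mem_piFinset, funext_iff]
  simp only [mapWeight]
  rw [hfiber, Finset.prod_univ_sum]

variable [Fintype Γ]

theorem sum_indicator_preimage_comp (f : Ω → Γ) (P : Ω → ℝ) {n : ℕ} (T : Set (Fin n → Γ)) :
    ∑ τ : Fin n → Ω, Set.indicator {τ | f ∘ τ ∈ T} (fun τ => ∏ i, P (τ i)) τ =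
      ∑ b : Fin n → Γ, T.indicator (fun b => ∏ i, mapWeight f P (b i)) b := by
  classical
  rw [Finset.sum_indicator_eq_sum_filter, Finset.sum_indicator_eq_sum_filter]
  simp only [prod_mapWeight, Finset.sum_fiberwise_eq_sum_filter, Finset.mem_filter_univ]
  rfl

theorem cylMeasure_preimage_map (f : Ω → Γ) (P : Ω → ℝ) (S : Set (List Γ)) :
    cylMeasure P {σ | σ.map f ∈ S} = cylMeasure (mapWeight f P) S := by
  unfold cylMeasure
  congr 1
  funext n
  have hset : {τ : Fin n → Ω | ∃ σ ∈ {σ : List Ω | σ.map f ∈ S}, σ <+: List.ofFn τ} =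
      {τ | f ∘ τ ∈ {b : Fin n → Γ | ∃ ρ ∈ S, ρ <+: List.ofFn b}} := by
    ext τ
    simp only [Set.mem_ofPred_eq, exists_prefix_map_iff, List.map_ofFn]
  rw [hset, sum_indicator_preimage_comp]

theorem MLTest.preimage_map (f : Ω → Γ) {P : Ω → ℝ} {C : Set (ℕ × List Γ)}
    (hC : MLTest (mapWeight f P) C) :
    MLTest P {p : ℕ × List Ω | (p.1, p.2.map f) ∈ C} :=
  ⟨hC.1.preimage_map f, fun n hn => by
    show cylMeasure P {σ | σ.map f ∈ {ρ | (n, ρ) ∈ C}} < _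
    exact cylMeasure_preimage_map f P _ ▸ hC.2 n hn⟩

theorem MLRandom.comp (f : Ω → Γ) {P : Ω → ℝ} {α : ℕ → Ω} (hα : MLRandom P α) :
    MLRandom (mapWeight f P) (f ∘ α) := by
  intro C hC
  obtain ⟨n, hn, hnot⟩ := hα _ (hC.preimage_map f)
  exact ⟨n, hn, fun h => hnot ((inOpen_preimage_map f _ α).2 h)⟩

end LetterMap

theorem mapWeight_decide_mem {Ω : Type*} [Fintype Ω] [DecidableEq Ω] {P : Ω → ℝ} (hP : IsFPS P)
    (A : Finset Ω) :
    mapWeight (fun a => decide (a ∈ A)) P =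
      fun b : Bool => if b then evP P (A : Set Ω) else 1 - evP P (A : Set Ω) := by
  have hA : evP P (A : Set Ω) = ∑ a ∈ A, P a := by
    simp [evP, Set.indicator_apply, Finset.sum_ite_mem]
  funext b
  cases b
  · rw [← hP.2, hA, ← Finset.sum_filter_add_sum_filter_not Finset.univ (· ∈ A)]
    simp [mapWeight]
  · simp [mapWeight, hA]

theorem characteristic_sequence_random_general {Ω : Type*} [Fintype Ω] [DecidableEq Ω]
    (P : Ω → ℝ) (hP : IsFPS P) (A : Finset Ω) (α : ℕ → Ω) (hα : MLRandom P α) :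
    MLRandom
      (fun b : Bool => if b then evP P (A : Set Ω) else 1 - evP P (A : Set Ω))
      (fun n => decide (α n ∈ A)) := by
  rw [← mapWeight_decide_mem hP A]
  exact hα.comp _

/-- If `α` is Martin-Löf `P`-random then the characteristic binary
sequence `χ_A(α)` of the event `A` (with `1 = true`, `0 = false`) is Martin-Löf
`P_A`-random, where `P_A(1) = P(A)` and `P_A(0) = 1 − P(A)`. -/
theorem characteristic_sequence_random {Ω : Type*} [Fintype Ω] [Nonempty Ω] [DecidableEq Ω]
    (P : Ω → ℝ) (hP : IsFPS P) (A : Finset Ω) (α : ℕ → Ω) (hα : MLRandom P α) :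
    MLRandom
      (fun b : Bool => if b then evP P (A : Set Ω) else 1 - evP P (A : Set Ω))
      (fun n => decide (α n ∈ A)) :=
  characteristic_sequence_random_general P hP A α hα

end Paper
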